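/- arXiv:2005.05228 — 3 statements merged into one kernel-verified Lean document; each statement's English description precedes it below -/
import Mathlib

section
/- Let L ≥ 1 and let w : A → B → ℕ be the edge-multiplicity function of a finite bipartite multigraph G' on parts A and B, and suppose every node of G' has degree at most L. Then there exists a matching M of G' (a set of pairs (a,b) with w a b ≥ 1, no two pairs sharing a man or a woman) such that every node whose degree in G' equals L is matched in M. -/
open Finset

/-- An `L`-regular bipartite multigraph with equal part sizes has a perfect
matching, obtained via Hall's theorem. -/
lemma regular_bipartite_perfect_matching {X Y : Type*} [Fintype X] [Fintype Y]
    (L : ℕ) (hL : 1 ≤ L) (W : X → Y → ℕ)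
    (hcard : Fintype.card X = Fintype.card Y)
    (hrow : ∀ x, ∑ y, W x y = L) (hcol : ∀ y, ∑ x, W x y = L) :
    ∃ f : X → Y, Function.Bijective f ∧ ∀ x, 1 ≤ W x (f x) := by
  classical
  set t : X → Finset Y := fun x => univ.filter (fun y => 1 ≤ W x y) with ht
  have hall : ∀ s : Finset X, s.card ≤ (s.biUnion t).card := by
    intro s
    have key : L * s.card ≤ L * (s.biUnion t).card := by
      have h1 : L * s.card = ∑ x ∈ s, ∑ y ∈ t x, W x y := by
        rw [mul_comm, ← smul_eq_mul, ← Finset.sum_const]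
        refine Finset.sum_congr rfl fun x _ => ?_
        rw [← hrow x]
        rw [ht]
        rw [Finset.sum_filter_of_ne]
        intro y _ hy
        omega
      have h2 : ∑ x ∈ s, ∑ y ∈ t x, W x y ≤ ∑ x ∈ s, ∑ y ∈ s.biUnion t, W x y := by
        refine Finset.sum_le_sum fun x hx => ?_
        exact Finset.sum_le_sum_of_subset (Finset.subset_biUnion_of_mem t hx)
      have h3 : ∑ x ∈ s, ∑ y ∈ s.biUnion t, W x y
          = ∑ y ∈ s.biUnion t, ∑ x ∈ s, W x y := Finset.sum_comm
      have h4 : ∑ y ∈ s.biUnion t, ∑ x ∈ s, W x y ≤ L * (s.biUnion t).card := by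
        rw [mul_comm, ← smul_eq_mul, ← Finset.sum_const]
        refine Finset.sum_le_sum fun y _ => ?_
        rw [← hcol y]
        exact Finset.sum_le_sum_of_subset (Finset.subset_univ s)
      omega
    exact Nat.le_of_mul_le_mul_left key hL
  obtain ⟨f, hinj, hf⟩ := (Finset.all_card_le_biUnion_card_iff_exists_injective t).mp hall
  refine ⟨f, ?_, fun x => ?_⟩
  · exact (Fintype.bijective_iff_injective_and_card f).mpr ⟨hinj, hcard⟩
  · have := hf x
    rw [ht] at this
    simpa using (Finset.mem_filter.mp this).2

/-- Let `L ≥ 1` and let `w : A → B → ℕ` be the edge multiplicities of a finite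
bipartite multigraph all of whose node degrees are at most `L`. Then there is a
matching (a set of pairs on edges of positive multiplicity, no two sharing a
node) in which every node of degree exactly `L` is matched. -/
theorem stmt_1 {A B : Type*} [Fintype A] [Fintype B]
    (L : ℕ) (hL : 1 ≤ L) (w : A → B → ℕ)
    (hdegA : ∀ a : A, ∑ b : B, w a b ≤ L)
    (hdegB : ∀ b : B, ∑ a : A, w a b ≤ L) :
    ∃ M : Finset (A × B),
      (∀ p ∈ M, 1 ≤ w p.1 p.2) ∧
      (∀ p ∈ M, ∀ q ∈ M, (p.1 = q.1 ∨ p.2 = q.2) → p = q) ∧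
      (∀ a : A, (∑ b : B, w a b) = L → ∃ b : B, (a, b) ∈ M) ∧
      (∀ b : B, (∑ a : A, w a b) = L → ∃ a : A, (a, b) ∈ M) := by
  classical
  -- Regularize: pad with a mirror copy and deficiency edges.
  set W : A ⊕ B → B ⊕ A → ℕ := fun x y =>
    match x, y with
    | Sum.inl a, Sum.inl b => w a b
    | Sum.inl a, Sum.inr a' => if a = a' then L - ∑ b : B, w a b else 0
    | Sum.inr b, Sum.inl b' => if b = b' then L - ∑ a : A, w a b else 0
    | Sum.inr b, Sum.inr a => w a b
    with hW
  have hrow : ∀ x, ∑ y, W x y = L := by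
    intro x
    cases x with
    | inl a =>
        have := hdegA a
        rw [Fintype.sum_sum_type]
        simp only [hW]
        simp [Finset.sum_ite_eq, Finset.sum_ite_eq']
        omega
    | inr b =>
        have := hdegB b
        rw [Fintype.sum_sum_type]
        simp only [hW]
        simp [Finset.sum_ite_eq, Finset.sum_ite_eq']
        omega
  have hcol : ∀ y, ∑ x, W x y = L := by
    intro y
    cases y with
    | inl b =>
        have := hdegB b
        rw [Fintype.sum_sum_type]
        simp only [hW]
        simp [Finset.sum_ite_eq, Finset.sum_ite_eq']
        omega
    | inr a =>
        have := hdegA a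
        rw [Fintype.sum_sum_type]
        simp only [hW]
        simp [Finset.sum_ite_eq, Finset.sum_ite_eq']
        omega
  obtain ⟨f, hbij, hf⟩ := regular_bipartite_perfect_matching L hL W
    (by simp [Fintype.card_sum, Nat.add_comm]) hrow hcol
  refine ⟨univ.filter (fun p : A × B => f (Sum.inl p.1) = Sum.inl p.2), ?_, ?_, ?_, ?_⟩
  · intro p hp
    have hp' := (Finset.mem_filter.mp hp).2
    have h := hf (Sum.inl p.1)
    rw [hp'] at h
    exact h
  · intro p hp q hq hpq
    have hp' := (Finset.mem_filter.mp hp).2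
    have hq' := (Finset.mem_filter.mp hq).2
    rcases hpq with h1 | h2
    · have : Sum.inl p.2 = (Sum.inl q.2 : B ⊕ A) := by rw [← hp', ← hq', h1]
      have h2 : p.2 = q.2 := by injection this
      exact Prod.ext h1 h2
    · have : f (Sum.inl p.1) = f (Sum.inl q.1) := by rw [hp', hq', h2]
      have h1 : p.1 = q.1 := by
        have := hbij.injective this
        injection this
      exact Prod.ext h1 h2
  · intro a ha
    have h := hf (Sum.inl a)
    rcases hfa : f (Sum.inl a) with b | a'
    · exact ⟨b, Finset.mem_filter.mpr ⟨Finset.mem_univ _, hfa⟩⟩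
    · exfalso
      rw [hfa] at h
      simp only [hW] at h
      by_cases hc : a = a'
      · subst hc; rw [if_pos rfl] at h; omega
      · rw [if_neg hc] at h; omega
  · intro b hb
    obtain ⟨x, hx⟩ := hbij.surjective (Sum.inl b)
    have h := hf x
    rw [hx] at h
    cases x with
    | inl a => exact ⟨a, Finset.mem_filter.mpr ⟨Finset.mem_univ _, hx⟩⟩
    | inr b' =>
        exfalso
        simp only [hW] at h
        by_cases hc : b' = b
        · subst hc; rw [if_pos rfl] at h; omega
        · rw [if_neg hc] at h; omega
end

section
/- Let L ≥ 1 and let w : A → B → ℕ be the edge-multiplicity function of a finite bipartite multigraph G' on parts A and B, and suppose every node of G' has degree at most L. Then there exists a matching M of G' such that every node whose degree in G' equals L is matched in M and, moreover, L·|M| ≥ ∑_{a ∈ A} ∑_{b ∈ B} w a b, i.e. |M| is at least the total number of edges of G' divided by L. -/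
/-!
Pad the multigraph to an `L`-regular bipartite multigraph on `A ⊕ B` versus `B ⊕ A`: add a mirror
copy of it and join every node `v` to its copy by `L - deg v` parallel edges. By Hall's theorem a
regular bipartite multigraph of positive degree has a perfect matching, and removing it lowers the
degree by one, so the padded graph splits into `L` perfect matchings. Their restrictions to `A × B`
are matchings whose sizes add up to the number of edges, so one of them has at least a `1/L`
fraction of the edges. A node of degree `L` carries no padding edge, so every one of the perfect
matchings covers it by an original edge.
-/

open Finset Function

section RegularBipartite

variable {X Y : Type*} [Fintype X] [Fintype Y]

theorem exists_injective_of_sum_eq_of_sum_le [DecidableEq Y] {d : ℕ} (hd : 0 < d)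
    (w : X → Y → ℕ) (hX : ∀ x, ∑ y, w x y = d) (hY : ∀ y, ∑ x, w x y ≤ d) :
    ∃ f : X → Y, Injective f ∧ ∀ x, w x (f x) ≠ 0 := by
  set N : X → Finset Y := fun x => {y | w x y ≠ 0}
  suffices hall : ∀ S : Finset X, #S ≤ #(S.biUnion N) by
    obtain ⟨f, hinj, hf⟩ := (all_card_le_biUnion_card_iff_exists_injective N).mp hall
    exact ⟨f, hinj, fun x => (mem_filter.mp (hf x)).2⟩
  intro S
  refine Nat.le_of_mul_le_mul_left ?_ hd
  calc d * #S = ∑ x ∈ S, ∑ y ∈ S.biUnion N, w x y := by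
        rw [mul_comm, ← smul_eq_mul, ← sum_const]
        refine sum_congr rfl fun x hx => (hX x).symm.trans ?_
        refine (sum_subset (subset_univ _) fun y _ hy => ?_).symm
        by_contra h
        exact hy (mem_biUnion.mpr ⟨x, hx, mem_filter.mpr ⟨mem_univ y, h⟩⟩)
    _ = ∑ y ∈ S.biUnion N, ∑ x ∈ S, w x y := sum_comm
    _ ≤ ∑ _y ∈ S.biUnion N, d :=
        sum_le_sum fun y _ => (sum_le_sum_of_subset (subset_univ S)).trans (hY y)
    _ = d * #(S.biUnion N) := by rw [sum_const, smul_eq_mul, mul_comm]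

theorem card_eq_of_regular {d : ℕ} (hd : 0 < d) (w : X → Y → ℕ)
    (hX : ∀ x, ∑ y, w x y = d) (hY : ∀ y, ∑ x, w x y = d) :
    Fintype.card X = Fintype.card Y := by
  refine Nat.eq_of_mul_eq_mul_left hd ?_
  calc d * Fintype.card X = ∑ x, ∑ y, w x y := by simp [hX, mul_comm]
    _ = ∑ y, ∑ x, w x y := sum_comm
    _ = d * Fintype.card Y := by simp [hY, mul_comm]

theorem exists_bijective_add_of_regular [DecidableEq Y] {d : ℕ} (w : X → Y → ℕ)
    (hX : ∀ x, ∑ y, w x y = d + 1) (hY : ∀ y, ∑ x, w x y = d + 1) :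
    ∃ (f : X → Y) (w' : X → Y → ℕ), Bijective f ∧
      (∀ x, ∑ y, w' x y = d) ∧ (∀ y, ∑ x, w' x y = d) ∧
      ∀ x y, w x y = (if f x = y then 1 else 0) + w' x y := by
  obtain ⟨f, hinj, hf⟩ :=
    exists_injective_of_sum_eq_of_sum_le d.succ_pos w hX fun y => (hY y).le
  have hbij : Bijective f := (Fintype.bijective_iff_injective_and_card f).mpr
    ⟨hinj, card_eq_of_regular d.succ_pos w hX hY⟩
  set w' : X → Y → ℕ := fun x y => w x y - if f x = y then 1 else 0
  have hw : ∀ x y, w x y = (if f x = y then 1 else 0) + w' x y := by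
    intro x y
    split_ifs with h
    · subst h
      simp [w', Nat.add_sub_cancel' (Nat.one_le_iff_ne_zero.mpr (hf x))]
    · simp [w', h]
  refine ⟨f, w', hbij, fun x => ?_, fun y => ?_, hw⟩
  · have := hX x
    simp only [hw x, sum_add_distrib, sum_ite_eq, mem_univ, if_true] at this
    omega
  · have := hY y
    rw [sum_congr rfl fun x _ => hw x y, sum_add_distrib,
      hbij.sum_comp fun y' => if y' = y then 1 else 0] at this
    simp only [sum_ite_eq', mem_univ, if_true] at this
    omega

theorem exists_perfect_matchings_of_regular [DecidableEq Y] (d : ℕ) (w : X → Y → ℕ)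
    (hX : ∀ x, ∑ y, w x y = d) (hY : ∀ y, ∑ x, w x y = d) :
    ∃ f : Fin d → X → Y, (∀ i, Bijective (f i)) ∧ ∀ x y, w x y = #{i | f i x = y} := by
  induction d generalizing w with
  | zero =>
    refine ⟨finZeroElim, finZeroElim, fun x y => ?_⟩
    simpa using (sum_eq_zero_iff.mp (hX x)) y (mem_univ y)
  | succ d ih =>
    obtain ⟨f₀, w', hf₀, hX', hY', hw⟩ := exists_bijective_add_of_regular w hX hY
    obtain ⟨f, hf, hw'⟩ := ih w' hX' hY'
    refine ⟨Fin.cons f₀ f, Fin.cases hf₀ hf, fun x y => ?_⟩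
    rw [Fin.card_filter_univ_succ', hw, hw']
    simp

end RegularBipartite

section Padding

variable {A B : Type*} [Fintype A] [Fintype B] [DecidableEq A] [DecidableEq B]

def padToRegular (L : ℕ) (w : A → B → ℕ) : A ⊕ B → B ⊕ A → ℕ
  | .inl a, .inl b => w a b
  | .inl a, .inr a' => if a = a' then L - ∑ b, w a b else 0
  | .inr b, .inl b' => if b = b' then L - ∑ a, w a b else 0
  | .inr b, .inr a => w a b

variable {L : ℕ} {w : A → B → ℕ}

theorem sum_padToRegular_right (hA : ∀ a, ∑ b, w a b ≤ L) (hB : ∀ b, ∑ a, w a b ≤ L)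
    (x : A ⊕ B) : ∑ y, padToRegular L w x y = L := by
  cases x with
  | inl a => simp [padToRegular, Fintype.sum_sum_type, Nat.add_sub_cancel' (hA a)]
  | inr b => simp [padToRegular, Fintype.sum_sum_type, Nat.sub_add_cancel (hB b)]

theorem sum_padToRegular_left (hA : ∀ a, ∑ b, w a b ≤ L) (hB : ∀ b, ∑ a, w a b ≤ L)
    (y : B ⊕ A) : ∑ x, padToRegular L w x y = L := by
  cases y with
  | inl b => simp [padToRegular, Fintype.sum_sum_type, Nat.add_sub_cancel' (hB b)]
  | inr a => simp [padToRegular, Fintype.sum_sum_type, Nat.sub_add_cancel (hA a)]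

theorem padToRegular_inl_inr_eq_zero {a : A} (ha : ∑ b, w a b = L) (a' : A) :
    padToRegular L w (.inl a) (.inr a') = 0 := by
  simp [padToRegular, ha]

theorem padToRegular_inr_inl_eq_zero {b : B} (hb : ∑ a, w a b = L) (b' : B) :
    padToRegular L w (.inr b') (.inl b) = 0 := by
  rcases eq_or_ne b' b with rfl | h
  · simp [padToRegular, hb]
  · simp [padToRegular, h]

end Padding

section Restriction

variable {A B : Type*} [Fintype A] [Fintype B] [DecidableEq A] [DecidableEq B]

def innerPairs (g : A ⊕ B → B ⊕ A) : Finset (A × B) := {p | g (.inl p.1) = .inl p.2}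

@[simp]
theorem mem_innerPairs {g : A ⊕ B → B ⊕ A} {p : A × B} :
    p ∈ innerPairs g ↔ g (.inl p.1) = .inl p.2 := by
  simp [innerPairs]

theorem innerPairs_eq_of_fst_eq_or_snd_eq {g : A ⊕ B → B ⊕ A} (hg : Injective g)
    {p q : A × B} (hp : p ∈ innerPairs g) (hq : q ∈ innerPairs g) (h : p.1 = q.1 ∨ p.2 = q.2) :
    p = q := by
  rw [mem_innerPairs] at hp hq
  rcases h with h | h
  · exact Prod.ext h (Sum.inl_injective (hp.symm.trans (h ▸ hq)))
  · exact Prod.ext (Sum.inl_injective (hg (hp.trans (h ▸ hq.symm)))) h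

theorem sum_card_innerPairs {L : ℕ} {W : A ⊕ B → B ⊕ A → ℕ} {f : Fin L → A ⊕ B → B ⊕ A}
    (hW : ∀ x y, W x y = #{i | f i x = y}) :
    ∑ i, #(innerPairs (f i)) = ∑ a, ∑ b, W (.inl a) (.inl b) := by
  simp only [innerPairs, card_filter, hW]
  rw [sum_comm, Fintype.sum_prod_type]

end Restriction

/-- Let `L ≥ 1` and let `w : A → B → ℕ` be the edge multiplicities of a finite
bipartite multigraph all of whose node degrees are at most `L`. Then there is a
matching in which every node of degree exactly `L` is matched and, moreover,
`L·|M|` is at least the total number of edges. -/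
theorem stmt_2 {A B : Type*} [Fintype A] [Fintype B]
    (L : ℕ) (hL : 1 ≤ L) (w : A → B → ℕ)
    (hdegA : ∀ a : A, ∑ b : B, w a b ≤ L)
    (hdegB : ∀ b : B, ∑ a : A, w a b ≤ L) :
    ∃ M : Finset (A × B),
      (∀ p ∈ M, 1 ≤ w p.1 p.2) ∧
      (∀ p ∈ M, ∀ q ∈ M, (p.1 = q.1 ∨ p.2 = q.2) → p = q) ∧
      (∀ a : A, (∑ b : B, w a b) = L → ∃ b : B, (a, b) ∈ M) ∧
      (∀ b : B, (∑ a : A, w a b) = L → ∃ a : A, (a, b) ∈ M) ∧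
      (∑ a : A, ∑ b : B, w a b) ≤ L * M.card := by
  classical
  obtain ⟨f, hf, hW⟩ := exists_perfect_matchings_of_regular L (padToRegular L w)
    (sum_padToRegular_right hdegA hdegB) (sum_padToRegular_left hdegA hdegB)
  have hedge : ∀ i x y, f i x = y → padToRegular L w x y ≠ 0 := fun i x y h => by
    rw [hW]
    exact (card_pos.mpr ⟨i, by simp [h]⟩).ne'
  obtain ⟨i, -, hi⟩ := exists_le_of_sum_le (univ_nonempty_iff.mpr ⟨⟨0, hL⟩⟩)
    (f := fun _ => ∑ a, ∑ b, w a b) (g := fun i => L * #(innerPairs (f i)))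
    (by simp [← mul_sum, sum_card_innerPairs hW, padToRegular])
  refine ⟨innerPairs (f i), fun p hp => ?_,
    fun p hp q hq => innerPairs_eq_of_fst_eq_or_snd_eq (hf i).1 hp hq, fun a ha => ?_,
    fun b hb => ?_, hi⟩
  · exact Nat.one_le_iff_ne_zero.mpr (hedge i _ _ (mem_innerPairs.mp hp))
  · rcases h : f i (.inl a) with b | a'
    · exact ⟨b, mem_innerPairs.mpr h⟩
    · exact absurd (padToRegular_inl_inr_eq_zero ha a') (hedge i _ _ h)
  · obtain ⟨x | b', hx⟩ := (hf i).2 (.inl b)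
    · exact ⟨x, mem_innerPairs.mpr hx⟩
    · exact absurd (padToRegular_inr_inl_eq_zero hb b') (hedge i _ _ hx)
end

section
/- Every finite instance of the stable matching problem with ties and incomplete lists admits a stable matching. That is, for any finite types A and B, any set E ⊆ A × B of acceptable pairs, and any rank functions rkA : A → B → ℕ and rkB : B → A → ℕ, there exists a matching M ⊆ E that is stable. -/
/-- `M` is a matching of the instance with acceptable pairs `E`:
`M ⊆ E` and no man and no woman occurs in more than one pair. -/
def IsSMMatching {A B : Type*} (E M : Finset (A × B)) : Prop :=
  M ⊆ E ∧ ∀ p ∈ M, ∀ q ∈ M, (p.1 = q.1 ∨ p.2 = q.2) → p = q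

/-- `(a, b)` blocks `M`: it is not in `M`, `a` is unmatched or strictly
prefers `b` to his partner, and `b` is unmatched or strictly prefers `a`
to her partner (smaller rank means more preferred). -/
def SMBlocks {A B : Type*} (rkA : A → B → ℕ) (rkB : B → A → ℕ)
    (M : Finset (A × B)) (a : A) (b : B) : Prop :=
  (a, b) ∉ M ∧
  (∀ b', (a, b') ∈ M → rkA a b < rkA a b') ∧
  (∀ a', (a', b) ∈ M → rkB b a < rkB b a')

/-- `M` is a stable matching: a matching with no blocking acceptable pair. -/
def IsStableSM {A B : Type*} (E : Finset (A × B)) (rkA : A → B → ℕ)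
    (rkB : B → A → ℕ) (M : Finset (A × B)) : Prop :=
  IsSMMatching E M ∧ ∀ a b, (a, b) ∈ E → ¬ SMBlocks rkA rkB M a b

/-- The instance has ties of size at most `L`. -/
def TiesAtMost {A B : Type*} [Fintype A] [Fintype B] [DecidableEq A] [DecidableEq B]
    (E : Finset (A × B)) (rkA : A → B → ℕ) (rkB : B → A → ℕ) (L : ℕ) : Prop :=
  (∀ a r, (Finset.univ.filter fun b => (a, b) ∈ E ∧ rkA a b = r).card ≤ L) ∧
  (∀ b r, (Finset.univ.filter fun a => (a, b) ∈ E ∧ rkB b a = r).card ≤ L)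



open Finset

section GS
variable {A B : Type*} [Fintype A] [Fintype B] [DecidableEq A] [DecidableEq B]
variable (E : Finset (A × B)) (rkA : A → B → ℕ) (rkB : B → A → ℕ)
set_option linter.unusedSectionVars false

/-- the set of unmatched men -/
noncomputable def SMfree (M : Finset (A × B)) : Finset A :=
  @Finset.filter _ (fun a => ∀ b, (a, b) ∉ M) (Classical.decPred _) Finset.univ

/-- If the process has terminated (every man with a nonempty list is matched),
the tentative matching is stable. -/
theorem SM_terminal (P M : Finset (A × B))
    (hPE : P ⊆ E) (hMP : M ⊆ P)
    (hmatch : ∀ p ∈ M, ∀ q ∈ M, (p.1 = q.1 ∨ p.2 = q.2) → p = q)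
    (hI1 : ∀ p ∈ E, p ∉ P → ∃ a', (a', p.2) ∈ M ∧ rkB p.2 a' < rkB p.2 p.1)
    (hI2 : ∀ p ∈ M, ∀ b', (p.1, b') ∈ P → rkA p.1 p.2 ≤ rkA p.1 b')
    (hterm : ∀ a b, (a, b) ∈ P → ∃ b', (a, b') ∈ M) :
    IsStableSM E rkA rkB M := by
  refine ⟨⟨hMP.trans hPE, hmatch⟩, ?_⟩
  rintro a b hE ⟨hnM, hA, hB⟩
  by_cases hP : (a, b) ∈ P
  · obtain ⟨b', hb'⟩ := hterm a b hP
    have h1 : rkA a b' ≤ rkA a b := hI2 (a, b') hb' b hP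
    have h2 : rkA a b < rkA a b' := hA b' hb'
    omega
  · obtain ⟨a', ha', hlt⟩ := hI1 (a, b) hE hP
    have h3 : rkB b a < rkB b a' := hB a' ha'
    have h4 : rkB b a' < rkB b a := hlt
    omega
end GS

section GS2
variable {A B : Type*} [Fintype A] [Fintype B] [DecidableEq A] [DecidableEq B]
variable (E : Finset (A × B)) (rkA : A → B → ℕ) (rkB : B → A → ℕ)

set_option linter.unusedSectionVars false

theorem mem_SMfree {M : Finset (A × B)} {a : A} :
    a ∈ SMfree M ↔ ∀ b, (a, b) ∉ M := by
  rw [SMfree, @Finset.mem_filter _ _ (Classical.decPred _)]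
  simp

/-- Invariant preservation for an accepted proposal of `a` to `b`. -/
theorem SM_accept (P M : Finset (A × B)) (a : A) (b : B)
    (hPE : P ⊆ E) (hMP : M ⊆ P)
    (hmatch : ∀ p ∈ M, ∀ q ∈ M, (p.1 = q.1 ∨ p.2 = q.2) → p = q)
    (hI1 : ∀ p ∈ E, p ∉ P → ∃ a', (a', p.2) ∈ M ∧ rkB p.2 a' < rkB p.2 p.1)
    (hI2 : ∀ p ∈ M, ∀ b', (p.1, b') ∈ P → rkA p.1 p.2 ≤ rkA p.1 b')
    (haP : (a, b) ∈ P) (hafree : ∀ b', (a, b') ∉ M)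
    (hbmin : ∀ b', (a, b') ∈ P → rkA a b ≤ rkA a b')
    (hprev : ∀ a', (a', b) ∈ M → rkB b a < rkB b a') :
    (P.filter (fun p => ¬(p.2 = b ∧ rkB b a < rkB b p.1))) ⊆ E ∧
    (insert (a, b) (M.filter fun p => p.2 ≠ b)) ⊆
      (P.filter (fun p => ¬(p.2 = b ∧ rkB b a < rkB b p.1))) ∧
    (∀ p ∈ (insert (a, b) (M.filter fun p => p.2 ≠ b)),
      ∀ q ∈ (insert (a, b) (M.filter fun p => p.2 ≠ b)), (p.1 = q.1 ∨ p.2 = q.2) → p = q) ∧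
    (∀ p ∈ E, p ∉ (P.filter (fun p => ¬(p.2 = b ∧ rkB b a < rkB b p.1))) →
      ∃ a', (a', p.2) ∈ (insert (a, b) (M.filter fun p => p.2 ≠ b)) ∧ rkB p.2 a' < rkB p.2 p.1) ∧
    (∀ p ∈ (insert (a, b) (M.filter fun p => p.2 ≠ b)),
      ∀ b', (p.1, b') ∈ (P.filter (fun p => ¬(p.2 = b ∧ rkB b a < rkB b p.1))) →
        rkA p.1 p.2 ≤ rkA p.1 b') := by
  set P' := P.filter (fun p => ¬(p.2 = b ∧ rkB b a < rkB b p.1)) with hP'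
  set M' := insert (a, b) (M.filter fun p => p.2 ≠ b) with hM'
  have hP'P : P' ⊆ P := Finset.filter_subset _ _
  have hMF : (M.filter fun p : A × B => p.2 ≠ b) ⊆ M := Finset.filter_subset _ _
  refine ⟨hP'P.trans hPE, ?_, ?_, ?_, ?_⟩
  · -- M' ⊆ P'
    intro p hp
    rw [hM', Finset.mem_insert] at hp
    rcases hp with rfl | hp
    · rw [hP', Finset.mem_filter]
      exact ⟨haP, by simp⟩
    · rw [Finset.mem_filter] at hp
      rw [hP', Finset.mem_filter]
      refine ⟨hMP hp.1, ?_⟩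
      simp only [not_and]
      intro h; exact absurd h hp.2
  · -- matching
    intro p hp q hq hpq
    rw [hM', Finset.mem_insert] at hp hq
    rcases hp with rfl | hp <;> rcases hq with rfl | hq
    · rfl
    · exfalso
      rw [Finset.mem_filter] at hq
      rcases hpq with h1 | h2
      · have h1' : a = q.1 := h1
        exact hafree q.2 (by rw [h1', Prod.mk.eta]; exact hq.1)
      · exact hq.2 h2.symm
    · exfalso
      rw [Finset.mem_filter] at hp
      rcases hpq with h1 | h2
      · have h1' : a = p.1 := h1.symm
        exact hafree p.2 (by rw [h1', Prod.mk.eta]; exact hp.1)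
      · exact hp.2 h2
    · rw [Finset.mem_filter] at hp hq
      exact hmatch p hp.1 q hq.1 hpq
  · -- I1
    intro p hpE hpP'
    by_cases hpP : p ∈ P
    · -- p was deleted just now: p.2 = b and rkB b a < rkB b p.1
      rw [hP', Finset.mem_filter] at hpP'
      push_neg at hpP'
      obtain ⟨hb2, hlt⟩ := hpP' hpP
      refine ⟨a, ?_, ?_⟩
      · rw [hb2, hM']; exact Finset.mem_insert_self _ _
      · rw [hb2]; exact hlt
    · obtain ⟨a', ha', hlt⟩ := hI1 p hpE hpP
      by_cases hb : p.2 = b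
      · refine ⟨a, by rw [hb, hM']; exact Finset.mem_insert_self _ _, ?_⟩
        have h2 := hprev a' (hb ▸ ha')
        rw [hb] at hlt ⊢
        exact lt_trans h2 hlt
      · exact ⟨a', by rw [hM']; exact Finset.mem_insert_of_mem (Finset.mem_filter.mpr ⟨ha', hb⟩), hlt⟩
  · -- I2
    intro p hp b' hb'
    rw [hM', Finset.mem_insert] at hp
    rcases hp with rfl | hp
    · exact hbmin b' (hP'P hb')
    · exact hI2 p (hMF hp) b' (hP'P hb')

end GS2

section GS3
variable {A B : Type*} [Fintype A] [Fintype B] [DecidableEq A] [DecidableEq B]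
variable (E : Finset (A × B)) (rkA : A → B → ℕ) (rkB : B → A → ℕ)

set_option linter.unusedSectionVars false

theorem SM_aux (hinj : ∀ b : B, Function.Injective (rkB b)) :
    ∀ n (P M : Finset (A × B)),
      2 * P.card + (SMfree M).card ≤ n →
      P ⊆ E → M ⊆ P →
      (∀ p ∈ M, ∀ q ∈ M, (p.1 = q.1 ∨ p.2 = q.2) → p = q) →
      (∀ p ∈ E, p ∉ P → ∃ a', (a', p.2) ∈ M ∧ rkB p.2 a' < rkB p.2 p.1) →
      (∀ p ∈ M, ∀ b', (p.1, b') ∈ P → rkA p.1 p.2 ≤ rkA p.1 b') →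
      ∃ M', IsStableSM E rkA rkB M' := by
  intro n
  induction n with
  | zero =>
    intro P M hμ hPE hMP hmatch hI1 hI2
    have hP0 : P = ∅ := by
      rw [← Finset.card_eq_zero]; omega
    refine ⟨M, SM_terminal E rkA rkB P M hPE hMP hmatch hI1 hI2 ?_⟩
    intro a b hab
    rw [hP0] at hab
    exact absurd hab (Finset.notMem_empty _)
  | succ n ih =>
    intro P M hμ hPE hMP hmatch hI1 hI2
    by_cases hterm : ∀ a b, (a, b) ∈ P → ∃ b', (a, b') ∈ M
    · exact ⟨M, SM_terminal E rkA rkB P M hPE hMP hmatch hI1 hI2 hterm⟩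
    push_neg at hterm
    obtain ⟨a, b0, hab0P, hafree⟩ := hterm
    have hSne : (Finset.univ.filter fun b => (a, b) ∈ P).Nonempty :=
      ⟨b0, by simp [hab0P]⟩
    obtain ⟨b, hbS, hbmin⟩ := Finset.exists_min_image _ (fun b => rkA a b) hSne
    simp only [Finset.mem_filter, Finset.mem_univ, true_and] at hbS
    have hbmin' : ∀ b', (a, b') ∈ P → rkA a b ≤ rkA a b' := fun b' h =>
      hbmin b' (by simp [h])
    have haSM : a ∈ SMfree M := mem_SMfree.mpr hafree
    have hafreepos : 1 ≤ (SMfree M).card := Finset.card_pos.mpr ⟨a, haSM⟩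
    have hPpos : 1 ≤ P.card := Finset.card_pos.mpr ⟨(a, b), hbS⟩
    by_cases hmat : ∃ a0, (a0, b) ∈ M
    · obtain ⟨a0, ha0⟩ := hmat
      have hane : a ≠ a0 := fun h => hafree b (h ▸ ha0)
      by_cases hrej : rkB b a0 < rkB b a
      · -- rejection: delete (a,b)
        refine ih (P.erase (a, b)) M ?_ ((Finset.erase_subset _ _).trans hPE) ?_ hmatch ?_ ?_
        · rw [Finset.card_erase_of_mem hbS]; omega
        · intro p hp
          refine Finset.mem_erase.mpr ⟨?_, hMP hp⟩
          rintro rfl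
          exact hafree b hp
        · intro p hpE hpP'
          by_cases hpP : p ∈ P
          · have hpab : p = (a, b) := by
              by_contra hne
              exact hpP' (Finset.mem_erase.mpr ⟨hne, hpP⟩)
            subst hpab
            exact ⟨a0, ha0, hrej⟩
          · exact hI1 p hpE hpP
        · intro p hp b' hb'
          exact hI2 p hp b' (Finset.mem_of_mem_erase hb')
      · -- acceptance with previous partner a0
        have hlt : rkB b a < rkB b a0 :=
          lt_of_le_of_ne (not_lt.mp hrej) (fun h => hane (hinj b h))
        have hprev : ∀ a', (a', b) ∈ M → rkB b a < rkB b a' := by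
          intro a' ha'
          have : (a', b) = (a0, b) := hmatch _ ha' _ ha0 (Or.inr rfl)
          have ha'0 : a' = a0 := congrArg Prod.fst this
          rw [ha'0]; exact hlt
        obtain ⟨h1, h2, h3, h4, h5⟩ := SM_accept E rkA rkB P M a b hPE hMP hmatch hI1 hI2
          hbS hafree hbmin' hprev
        refine ih _ _ ?_ h1 h2 h3 h4 h5
        -- measure: card P' ≤ card P - 1, card free' ≤ card free + 1
        have hPc : (P.filter (fun p => ¬(p.2 = b ∧ rkB b a < rkB b p.1))).card ≤ P.card - 1 := by
          have hsub : (P.filter (fun p => ¬(p.2 = b ∧ rkB b a < rkB b p.1))) ⊆ P.erase (a0, b) := by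
            intro p hp
            rw [Finset.mem_filter] at hp
            refine Finset.mem_erase.mpr ⟨?_, hp.1⟩
            rintro rfl
            exact hp.2 ⟨rfl, hlt⟩
          calc _ ≤ (P.erase (a0, b)).card := Finset.card_le_card hsub
            _ = P.card - 1 := Finset.card_erase_of_mem (hMP ha0)
        have hfc : (SMfree (insert (a, b) (M.filter fun p => p.2 ≠ b))).card ≤
            (SMfree M).card + 1 := by
          have hsub : SMfree (insert (a, b) (M.filter fun p => p.2 ≠ b)) ⊆
              insert a0 (SMfree M) := by
            intro a1 ha1
            rw [mem_SMfree] at ha1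
            rw [Finset.mem_insert]
            by_cases h10 : a1 = a0
            · exact Or.inl h10
            refine Or.inr (mem_SMfree.mpr ?_)
            intro b1 hb1
            by_cases hb1b : b1 = b
            · subst hb1b
              have : (a1, b1) = (a0, b1) := hmatch _ hb1 _ ha0 (Or.inr rfl)
              exact h10 (congrArg Prod.fst this)
            · exact ha1 b1 (Finset.mem_insert_of_mem (Finset.mem_filter.mpr ⟨hb1, hb1b⟩))
          calc _ ≤ (insert a0 (SMfree M)).card := Finset.card_le_card hsub
            _ ≤ (SMfree M).card + 1 := Finset.card_insert_le _ _
        omega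
    · -- acceptance, b previously unmatched
      push_neg at hmat
      have hprev : ∀ a', (a', b) ∈ M → rkB b a < rkB b a' := fun a' ha' =>
        absurd ha' (hmat a')
      obtain ⟨h1, h2, h3, h4, h5⟩ := SM_accept E rkA rkB P M a b hPE hMP hmatch hI1 hI2
        hbS hafree hbmin' hprev
      refine ih _ _ ?_ h1 h2 h3 h4 h5
      have hPc : (P.filter (fun p => ¬(p.2 = b ∧ rkB b a < rkB b p.1))).card ≤ P.card :=
        Finset.card_le_card (Finset.filter_subset _ _)
      have hfc : (SMfree (insert (a, b) (M.filter fun p => p.2 ≠ b))).card ≤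
          (SMfree M).card - 1 := by
        have hsub : SMfree (insert (a, b) (M.filter fun p => p.2 ≠ b)) ⊆
            (SMfree M).erase a := by
          intro a1 ha1
          rw [mem_SMfree] at ha1
          refine Finset.mem_erase.mpr ⟨?_, mem_SMfree.mpr ?_⟩
          · rintro rfl
            exact ha1 b (Finset.mem_insert_self _ _)
          · intro b1 hb1
            by_cases hb1b : b1 = b
            · subst hb1b
              exact hmat a1 hb1
            · exact ha1 b1 (Finset.mem_insert_of_mem (Finset.mem_filter.mpr ⟨hb1, hb1b⟩))
        calc _ ≤ ((SMfree M).erase a).card := Finset.card_le_card hsub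
          _ = (SMfree M).card - 1 := Finset.card_erase_of_mem haSM
      omega

end GS3

theorem SM_inj_aux {A : Type*} {n : ℕ} (f g : A → ℕ) (hg : ∀ a, g a < n)
    (hginj : Function.Injective g) :
    Function.Injective (fun a => f a * n + g a) := by
  intro x y h
  simp only at h
  rcases lt_trichotomy (f x) (f y) with hl | he | hl
  · nlinarith [hg x, hg y]
  · rw [he] at h; exact hginj (by omega)
  · nlinarith [hg x, hg y]

theorem SM_mono_aux {A : Type*} {n : ℕ} (f g : A → ℕ) (hg : ∀ a, g a < n)
    {x y : A} (h : f x < f y) : f x * n + g x < f y * n + g y := by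
  nlinarith [hg x, hg y]

/-- Every finite instance of the stable matching problem with ties and
incomplete lists admits a stable matching. -/
theorem stmt_3 {A B : Type*} [Fintype A] [Fintype B] [DecidableEq A] [DecidableEq B]
    (E : Finset (A × B)) (rkA : A → B → ℕ) (rkB : B → A → ℕ) :
    ∃ M : Finset (A × B), IsStableSM E rkA rkB M := by
  classical
  set n := Fintype.card A + 1 with hn
  let e := Fintype.equivFin A
  set rkB' : B → A → ℕ := fun b a => rkB b a * n + (e a : ℕ) with hrkB'
  have hebound : ∀ a : A, ((e a : ℕ)) < n := fun a => by
    have := (e a).2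
    omega
  have hinj : ∀ b, Function.Injective (rkB' b) :=
    fun b => SM_inj_aux (rkB b) (fun a => (e a : ℕ)) hebound
      (fun x y h => e.injective (Fin.ext h))
  have hmono : ∀ b a a', rkB b a < rkB b a' → rkB' b a < rkB' b a' :=
    fun b a a' h => SM_mono_aux (rkB b) (fun a => (e a : ℕ)) hebound h
  obtain ⟨M, hM⟩ := SM_aux E rkA rkB' hinj
    (2 * E.card + (SMfree (∅ : Finset (A × B))).card) E ∅ le_rfl
    (le_refl E) (Finset.empty_subset E)
    (by intro p hp; exact absurd hp (Finset.notMem_empty _))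
    (by intro p hp hnp; exact absurd hp hnp)
    (by intro p hp; exact absurd hp (Finset.notMem_empty _))
  refine ⟨M, hM.1, ?_⟩
  rintro a b hE ⟨hnM, hA, hB⟩
  exact hM.2 a b hE ⟨hnM, hA, fun a' ha' => hmono b a a' (hB a' ha')⟩
end
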